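/- arXiv:1406.2411 — 6 statements merged into one kernel-verified Lean document; each statement's English description precedes it below -/
import Mathlib

section
/- The automorphisms τ and κ of the free group F_3 on x, y, z defined by τ: x ↦ x^r y x^{-r}, y ↦ x, z ↦ z and κ: x ↦ x, y ↦ y^r z y^{-r}, z ↦ y satisfy the braid relation τκτ = κτκ, for every integer r. -/
/-!
A homomorphism out of the free group is determined by the images of the generators, and on
these both composites agree: each sends `z ↦ x` and `y ↦ xʳ y x⁻ʳ`, and both send `x` to
`xʳ yʳ z y⁻ʳ x⁻ʳ`. For `τκτ` this rests on `(xʳ y x⁻ʳ)ʳ = xʳ yʳ x⁻ʳ`, an instance of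
`(a b a⁻¹)ʳ = a bʳ a⁻¹`.
-/

namespace BraidA

variable (r : ℤ)

def x : FreeGroup (Fin 3) := FreeGroup.of 0
def y : FreeGroup (Fin 3) := FreeGroup.of 1
def z : FreeGroup (Fin 3) := FreeGroup.of 2

def τ : FreeGroup (Fin 3) →* FreeGroup (Fin 3) := FreeGroup.lift ![x ^ r * y * x ^ (-r), x, z]
def κ : FreeGroup (Fin 3) →* FreeGroup (Fin 3) := FreeGroup.lift ![x, y ^ r * z * y ^ (-r), y]

@[simp] lemma τ_x : τ r x = x ^ r * y * (x ^ r)⁻¹ := by simp [τ, x, zpow_neg]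
@[simp] lemma τ_y : τ r y = x := by simp [τ, y, x]
@[simp] lemma τ_z : τ r z = z := by simp [τ, z]
@[simp] lemma κ_x : κ r x = x := by simp [κ, x]
@[simp] lemma κ_y : κ r y = y ^ r * z * (y ^ r)⁻¹ := by simp [κ, y, zpow_neg]
@[simp] lemma κ_z : κ r z = y := by simp [κ, z, y]

lemma hom_ext_xyz {M : Type*} [Monoid M] {f g : FreeGroup (Fin 3) →* M}
    (hx : f x = g x) (hy : f y = g y) (hz : f z = g z) : f = g :=
  FreeGroup.ext_hom f g fun i => by fin_cases i <;> assumption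

theorem τ_comp_κ_comp_τ : (τ r).comp ((κ r).comp (τ r)) = (κ r).comp ((τ r).comp (κ r)) := by
  apply hom_ext_xyz <;>
    simp only [MonoidHom.comp_apply, map_mul, map_inv, map_zpow, conj_zpow,
      τ_x, τ_y, τ_z, κ_x, κ_y, κ_z]
  group

end BraidA

open FreeGroup

/-- Family (A_r–1): τ : x ↦ xʳ y x⁻ʳ, y ↦ x, z ↦ z and κ : x ↦ x, y ↦ yʳ z y⁻ʳ, z ↦ y
satisfy the braid relation τκτ = κτκ on the free group on x, y, z. -/
theorem stmt3 (r : ℤ) :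
    letI x : FreeGroup (Fin 3) := of 0
    letI y : FreeGroup (Fin 3) := of 1
    letI z : FreeGroup (Fin 3) := of 2
    letI τ : FreeGroup (Fin 3) →* FreeGroup (Fin 3) :=
      FreeGroup.lift ![x ^ r * y * x ^ (-r), x, z]
    letI κ : FreeGroup (Fin 3) →* FreeGroup (Fin 3) :=
      FreeGroup.lift ![x, y ^ r * z * y ^ (-r), y]
    τ.comp (κ.comp τ) = κ.comp (τ.comp κ) :=
  BraidA.τ_comp_κ_comp_τ r
end

section
/- The automorphisms τ and κ of the free group F_3 on x, y, z defined by τ: x ↦ x y^{-1} x, y ↦ x, z ↦ z and κ: x ↦ x, y ↦ y z^{-1} y, z ↦ y satisfy the braid relation τκτ = κτκ. -/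
open FreeGroup

/-- Case (C–1): τ : x ↦ x y⁻¹ x, y ↦ x, z ↦ z and κ : x ↦ x, y ↦ y z⁻¹ y, z ↦ y
satisfy the braid relation τκτ = κτκ on the free group on x, y, z. -/
theorem stmt4 :
    letI x : FreeGroup (Fin 3) := of 0
    letI y : FreeGroup (Fin 3) := of 1
    letI z : FreeGroup (Fin 3) := of 2
    letI τ : FreeGroup (Fin 3) →* FreeGroup (Fin 3) :=
      FreeGroup.lift ![x * y⁻¹ * x, x, z]
    letI κ : FreeGroup (Fin 3) →* FreeGroup (Fin 3) :=
      FreeGroup.lift ![x, y * z⁻¹ * y, y]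
    τ.comp (κ.comp τ) = κ.comp (τ.comp κ) := by
  -- Both sides send x ↦ x y⁻¹ z y⁻¹ x, y ↦ x y⁻¹ x and z ↦ x.
  ext i
  fin_cases i <;> simp [mul_assoc]
end

section
/- The automorphisms τ and κ of the free group F_3 on x, y, z defined by τ: x ↦ x^{-1} y^{-1} x, y ↦ y^2 x, z ↦ z and κ: x ↦ x, y ↦ y^{-1} z^{-1} y, z ↦ z^2 y satisfy the braid relation τκτ = κτκ. -/
open FreeGroup

/-- Case (D–1): τ : x ↦ x⁻¹ y⁻¹ x, y ↦ y² x, z ↦ z and κ : x ↦ x, y ↦ y⁻¹ z⁻¹ y, z ↦ z² y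
satisfy the braid relation τκτ = κτκ on the free group on x, y, z. -/
theorem stmt5 :
    letI x : FreeGroup (Fin 3) := of 0
    letI y : FreeGroup (Fin 3) := of 1
    letI z : FreeGroup (Fin 3) := of 2
    letI τ : FreeGroup (Fin 3) →* FreeGroup (Fin 3) :=
      FreeGroup.lift ![x⁻¹ * y⁻¹ * x, y ^ 2 * x, z]
    letI κ : FreeGroup (Fin 3) →* FreeGroup (Fin 3) :=
      FreeGroup.lift ![x, y⁻¹ * z⁻¹ * y, z ^ 2 * y]
    τ.comp (κ.comp τ) = κ.comp (τ.comp κ) := by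
  apply FreeGroup.ext_hom
  intro i
  fin_cases i <;> simp [pow_two, mul_assoc]
end

section
/- In the free group on x, y, for integers r, r', the equation (x^r y x^{r'})^r · x^r = x^r · y^r holds if and only if r' = -r or r = 0. -/
/-!
Counting the exponent of `x` (a homomorphism to `ℤ`) turns the equation into
`r * (r + r') + r = r`, i.e. `r * (r + r') = 0`. Conversely, for `r' = -r` the base
`x ^ r * y * x ^ (-r)` is a conjugate of `y`, so its `r`-th power is `x ^ r * y ^ r * x ^ (-r)`.
-/

open FreeGroup

theorem conj_zpow_mul_self {G : Type*} [Group G] (a b : G) (n : ℤ) :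
    (a * b * a⁻¹) ^ n * a = a * b ^ n := by
  rw [conj_zpow, inv_mul_cancel_right]

namespace FreeGroup

variable {α : Type*} [DecidableEq α]

def exponentSum (a : α) : FreeGroup α →* Multiplicative ℤ :=
  lift (Pi.mulSingle a (Multiplicative.ofAdd 1))

@[simp]
theorem exponentSum_of_self (a : α) : exponentSum a (of a) = Multiplicative.ofAdd 1 := by
  simp [exponentSum]

@[simp]
theorem exponentSum_of_of_ne {a b : α} (h : b ≠ a) : exponentSum a (of b) = 1 := by
  simp [exponentSum, Pi.mulSingle_eq_of_ne h]

end FreeGroup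

/-- In the free group on x, y: (xʳ y xʳ')ʳ xʳ = xʳ yʳ holds iff r' = -r or r = 0. -/
theorem stmt9 (r r' : ℤ) :
    letI x : FreeGroup (Fin 2) := of 0
    letI y : FreeGroup (Fin 2) := of 1
    ((x ^ r * y * x ^ r') ^ r * x ^ r = x ^ r * y ^ r) ↔ (r' = -r ∨ r = 0) := by
  constructor
  · intro h
    have hsum := congrArg (fun g => Multiplicative.toAdd (exponentSum 0 g)) h
    have hr : r * (r + r') = 0 := by
      simpa [toAdd_zpow] using hsum
    rcases mul_eq_zero.mp hr with hr | hr
    · exact Or.inr hr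
    · exact Or.inl (by linarith)
  · rintro (rfl | rfl)
    · rw [zpow_neg, conj_zpow_mul_self]
    · simp
end

section
/- In the free group on x, y, if r ≠ -r' then the element x^r y^{-r'} x^{r'} is primitive whenever y^{-r'} ≠ 1, in the sense that it is not a proper power: if x^r y^{-r'} x^{r'} = w^k for some element w and integer k ≥ 2, then r = -r' or r' = 0. -/
/-!
Conjugating by `x ^ r'` turns `x ^ r * y ^ (-r') * x ^ r'` into `x ^ (r + r') * y ^ (-r')`, so it
suffices that `x ^ m * y ^ n` with `m, n ≠ 0` is not a proper power. Its reduced word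
`x…x y…y` begins and ends with different generators, so it is cyclically reduced; hence if it were
`v ^ k`, the conjugator of `v` would be trivial and the word would be `W ^ k` for the cyclic
reduction `W` of `v`. Since `k ≥ 2`, `W W` is a subword; `W` contains both generators, so `W W`
has a `y` before an `x`, which never happens in `x…x y…y`.
-/

open FreeGroup List

namespace FreeGroup

variable {α : Type*}

theorem replicate_append_replicate_ne_flatten_replicate {a b : α} (hab : a ≠ b) {m n k : ℕ}
    (hm : m ≠ 0) (hn : n ≠ 0) (hk : 2 ≤ k) (s t : Bool) (W : List (α × Bool)) :
    replicate m (a, s) ++ replicate n (b, t) ≠ (replicate k W).flatten := by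
  intro h
  have hsorted : (replicate m (a, s) ++ replicate n (b, t)).Pairwise
      (fun p q => p.1 = b → q.1 = b) := by
    refine pairwise_append.2 ⟨?_, ?_, ?_⟩ <;> simp_all [pairwise_replicate]
  have mem_W : ∀ p ∈ replicate m (a, s) ++ replicate n (b, t), p ∈ W := by
    rw [h]
    simp +contextual [mem_flatten, mem_replicate]
  have haW : (a, s) ∈ W := mem_W _ (by simp [hm])
  have hbW : (b, t) ∈ W := mem_W _ (by simp [hn])
  obtain ⟨k, rfl⟩ : ∃ j, k = j + 2 := ⟨k - 2, by omega⟩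
  have hWW : W ++ W <+ replicate m (a, s) ++ replicate n (b, t) := by
    rw [h, replicate_succ', replicate_succ', flatten_append, flatten_append]
    simp
  exact hab ((pairwise_append.1 (hsorted.sublist hWW)).2.2 _ hbW _ haW rfl)

variable [DecidableEq α]

theorem toWord_zpow_of (a : α) (n : ℤ) :
    (of a ^ n).toWord = replicate n.natAbs (a, decide (0 ≤ n)) := by
  rcases n with n | n
  · simp [toWord_of_pow]
  · rw [zpow_negSucc, toWord_inv, toWord_of_pow]
    simp [invRev]

theorem toWord_zpow_of_mul_zpow_of {a b : α} (hab : a ≠ b) (m n : ℤ) :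
    (of a ^ m * of b ^ n).toWord =
      replicate m.natAbs (a, decide (0 ≤ m)) ++ replicate n.natAbs (b, decide (0 ≤ n)) := by
  rw [toWord_mul, toWord_zpow_of, toWord_zpow_of, IsReduced.reduce_eq]
  refine isChain_append.2 ⟨isChain_replicate_of_rel _ fun _ => rfl,
    isChain_replicate_of_rel _ fun _ => rfl, fun p hp q hq hpq => ?_⟩
  rw [eq_of_mem_replicate (mem_of_mem_getLast? hp),
    eq_of_mem_replicate (mem_of_mem_head? hq)] at hpq
  exact absurd hpq hab

theorem toWord_pow_eq_flatten_replicate {v : FreeGroup α} {k : ℕ} (hk : k ≠ 0)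
    (h : ∀ p ∈ (v ^ k).toWord.head?, ∀ q ∈ (v ^ k).toWord.getLast?, p.1 ≠ q.1) :
    (v ^ k).toWord = (replicate k (reduceCyclically v.toWord)).flatten := by
  rw [toWord_pow, reduceCyclically.reduce_flatten_replicate isReduced_toWord, if_neg hk] at h ⊢
  cases hC : reduceCyclically.conjugator v.toWord with
  | nil => simp
  | cons c C =>
    rw [hC] at h
    refine absurd rfl (h c (by simp) (c.1, !c.2) ?_)
    rw [getLast?_append_of_ne_nil _ (by simp [invRev])]
    simp [invRev]

theorem eq_zero_or_eq_zero_of_zpow_of_mul_zpow_of_eq_pow {a b : α} (hab : a ≠ b) {m n : ℤ}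
    {v : FreeGroup α} {k : ℕ} (hk : 2 ≤ k) (h : of a ^ m * of b ^ n = v ^ k) :
    m = 0 ∨ n = 0 := by
  by_contra! ⟨hm, hn⟩
  have hword := toWord_zpow_of_mul_zpow_of hab m n
  rw [h] at hword
  refine replicate_append_replicate_ne_flatten_replicate hab
    (Int.natAbs_ne_zero.2 hm) (Int.natAbs_ne_zero.2 hn) hk _ _ _
    (hword ▸ toWord_pow_eq_flatten_replicate (by omega) ?_)
  rw [hword, head?_append_of_ne_nil _ (by simpa), getLast?_append_of_ne_nil _ (by simpa)]
  simpa [head?_replicate, getLast?_replicate, hm, hn] using hab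

end FreeGroup

/-- In the free group on x, y: if xʳ y⁻ʳ' xʳ' is a proper power wᵏ (k ≥ 2),
then r = -r' or r' = 0. -/
theorem stmt11 (r r' : ℤ) (w : FreeGroup (Fin 2)) (k : ℕ) (hk : 2 ≤ k)
    (h : of (0 : Fin 2) ^ r * of (1 : Fin 2) ^ (-r') * of (0 : Fin 2) ^ r' = w ^ k) :
    r = -r' ∨ r' = 0 := by
  have hconj : of (0 : Fin 2) ^ (r + r') * of (1 : Fin 2) ^ (-r')
      = (of (0 : Fin 2) ^ r' * w * (of (0 : Fin 2) ^ r')⁻¹) ^ k := by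
    rw [conj_pow, ← h]
    group
  have := eq_zero_or_eq_zero_of_zpow_of_mul_zpow_of_eq_pow (by decide) hk hconj
  omega
end

section
/- In the free group on y, z, the equation z^s y^q = (z^s y)^s (y^r z^γ y^{r'})^q with q ≠ 0, γ ∈ {+1, -1}, and integers r, r', s, has a solution only when (q, r, γ, r', s) = (2, -1, -1, 1, 2). -/
/-!
Map the free group onto a Heisenberg group by y ↦ (1,0,0), z ↦ (0,1,0). The two abelian
coordinates give q(1 - r - r') = s and qγ = s - s², hence (1 - s)(1 - r - r') = γ with s ≠ 0
(as q ≠ 0), which forces s = 2, q = -2γ and r + r' = 1 + γ; the central coordinate then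
pins down r. For γ = -1 this is the claimed solution; for γ = 1 it leaves
(q, r, r', s) = (-2, 2, 0, 2), which is refuted by the representation
y ↦ (0 1), z ↦ (0 1 2) onto S₃.
-/

/-- The Heisenberg group over `R`, with the central coordinate doubled so that powers have the
formula `n (n - 1) a b` rather than `n (n - 1) a b / 2`. -/
@[ext] structure Heis (R : Type*) where
  a : R
  b : R
  c : R

namespace Heis

variable {R : Type*} [CommRing R]

instance : Mul (Heis R) := ⟨fun x y => ⟨x.a + y.a, x.b + y.b, x.c + y.c + 2 * x.a * y.b⟩⟩
instance : One (Heis R) := ⟨⟨0, 0, 0⟩⟩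
instance : Inv (Heis R) := ⟨fun x => ⟨-x.a, -x.b, -x.c + 2 * x.a * x.b⟩⟩

lemma mul_def (x y : Heis R) : x * y = ⟨x.a + y.a, x.b + y.b, x.c + y.c + 2 * x.a * y.b⟩ := rfl
lemma one_def : (1 : Heis R) = ⟨0, 0, 0⟩ := rfl
lemma inv_def (x : Heis R) : x⁻¹ = ⟨-x.a, -x.b, -x.c + 2 * x.a * x.b⟩ := rfl

instance : Group (Heis R) where
  mul_assoc x y z := by simp only [mul_def]; ext <;> dsimp <;> ring
  one_mul x := by simp only [mul_def, one_def]; ext <;> dsimp <;> ring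
  mul_one x := by simp only [mul_def, one_def]; ext <;> dsimp <;> ring
  inv_mul_cancel x := by simp only [mul_def, inv_def, one_def]; ext <;> dsimp <;> ring

lemma zpow_def (g : Heis R) (n : ℤ) :
    g ^ n = ⟨n * g.a, n * g.b, n * g.c + n * (n - 1) * g.a * g.b⟩ := by
  induction n using Int.induction_on with
  | zero => simp [one_def]
  | succ k ih => rw [zpow_add_one, ih, mul_def]; ext <;> push_cast <;> ring
  | pred k ih => rw [zpow_sub_one, ih, inv_def, mul_def]; ext <;> push_cast <;> ring

end Heis

def BraidEquation {G : Type*} [Group G] (q r γ r' s : ℤ) (y z : G) : Prop :=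
  z ^ s * y ^ q = (z ^ s * y) ^ s * (y ^ r * z ^ γ * y ^ r') ^ q

lemma BraidEquation.map {G H : Type*} [Group G] [Group H] {q r γ r' s : ℤ} {y z : G}
    (h : BraidEquation q r γ r' s y z) (f : G →* H) : BraidEquation q r γ r' s (f y) (f z) := by
  simpa only [BraidEquation, map_mul, map_zpow] using congrArg f h

lemma braidEquation_heis_iff (q r γ r' s : ℤ) :
    BraidEquation q r γ r' s (⟨1, 0, 0⟩ : Heis ℤ) ⟨0, 1, 0⟩ ↔
      q = s + q * (r + r') ∧ s = s ^ 2 + q * γ ∧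
        0 = s ^ 2 * (s - 1) + 2 * q * r * γ + q * (q - 1) * (r + r') * γ + 2 * s * q * γ := by
  simp only [BraidEquation, Heis.zpow_def, Heis.mul_def, Heis.mk.injEq, Int.cast_id]
  constructor <;> rintro ⟨e1, e2, e3⟩ <;>
    exact ⟨by linear_combination e1, by linear_combination e2, by linear_combination e3⟩

lemma braidEquation_heis_solutions {q r γ r' s : ℤ} (hq : q ≠ 0) (hγ : γ = 1 ∨ γ = -1)
    (ha : q = s + q * (r + r')) (hb : s = s ^ 2 + q * γ)
    (hc : 0 = s ^ 2 * (s - 1) + 2 * q * r * γ + q * (q - 1) * (r + r') * γ + 2 * s * q * γ) :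
    s = 2 ∧ (q = 2 ∧ r = -1 ∧ γ = -1 ∧ r' = 1 ∨ q = -2 ∧ r = 2 ∧ γ = 1 ∧ r' = 0) := by
  have hγγ : γ * γ = 1 := by rcases hγ with rfl | rfl <;> norm_num
  have hs : s ≠ 0 := by
    rintro rfl
    exact hq (by linear_combination (-γ) * hb - q * hγγ)
  have hunit : (1 - s) * ((1 - r - r') * γ) = 1 :=
    mul_left_cancel₀ hs (by linear_combination (1 - r - r') * γ * hb + q * (1 - r - r') * hγγ + ha)
  have hs2 : s = 2 := by
    rcases Int.eq_one_or_neg_one_of_mul_eq_one hunit with h | h <;> omega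
  subst hs2
  refine ⟨rfl, ?_⟩
  rcases hγ with rfl | rfl
  · obtain rfl : q = -2 := by linarith
    exact Or.inr ⟨rfl, by linarith, rfl, by linarith⟩
  · obtain rfl : q = 2 := by linarith
    exact Or.inl ⟨rfl, by linarith, rfl, by linarith⟩

lemma not_braidEquation_perm :
    ¬ BraidEquation (-2) 2 1 0 2 (Equiv.swap (0 : Fin 3) 1) (finRotate 3) := by
  unfold BraidEquation
  decide

open FreeGroup

/-- In the free group on y, z (y = of 0, z = of 1): the equation
zˢ y^q = (zˢ y)ˢ (yʳ z^γ yʳ')^q with q ≠ 0 and γ = ±1 has a solution only when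
(q, r, γ, r', s) = (2, -1, -1, 1, 2). -/
theorem stmt12 (q r γ r' s : ℤ) (hq : q ≠ 0) (hγ : γ = 1 ∨ γ = -1)
    (h : of (1 : Fin 2) ^ s * of (0 : Fin 2) ^ q =
      (of (1 : Fin 2) ^ s * of (0 : Fin 2)) ^ s *
        (of (0 : Fin 2) ^ r * of (1 : Fin 2) ^ γ * of (0 : Fin 2) ^ r') ^ q) :
    q = 2 ∧ r = -1 ∧ γ = -1 ∧ r' = 1 ∧ s = 2 := by
  have hbraid : BraidEquation q r γ r' s (of (0 : Fin 2)) (of 1) := h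
  obtain ⟨ha, hb, hc⟩ := (braidEquation_heis_iff q r γ r' s).mp
    (by simpa using hbraid.map (FreeGroup.lift ![(⟨1, 0, 0⟩ : Heis ℤ), ⟨0, 1, 0⟩]))
  obtain ⟨rfl, ⟨rfl, rfl, rfl, rfl⟩ | ⟨rfl, rfl, rfl, rfl⟩⟩ :=
    braidEquation_heis_solutions hq hγ ha hb hc
  · exact ⟨rfl, rfl, rfl, rfl, rfl⟩
  · exact absurd (by simpa using hbraid.map (FreeGroup.lift ![Equiv.swap 0 1, finRotate 3]))
      not_braidEquation_perm
end
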